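/- arXiv:1008.4764 — 2 statements merged into one kernel-verified Lean document; each statement's English description precedes it below -/
import Mathlib

section
/- Suppose (K; a_1,…,a_m) underlies a complete simplicial fan in ℝ^n and m − n = 2ℓ. Then the action of C_Ψ on U(K) is proper: the map C_Ψ × U(K) → U(K) × U(K), (g, z) ↦ (g·z, z), is a proper map, i.e. the preimage of every compact subset of U(K) × U(K) is compact. -/
/-!
Write `g = exp Ψ(w)` and `u = Re Ψ(w)`, so that `|g_i z_i| = e^{u_i} |z_i|` and `∑ u_i a_i = 0`.
Near a point `(y, z)` of `U(K) × U(K)`, `u_i` is bounded above where `z_i ≠ 0` and below where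
`y_i ≠ 0`. Let `I = {z_i = 0}` and `J = {y_i = 0}`. A relation `r` with `r_i ≤ 0` off `I` and
`r_i ≥ 0` off `J` vanishes: its positive and negative parts give the same point of the cones over
`I` and `J`, hence of the cone over `I ∩ J`, and linear independence forces both parts to be the
coefficients of that point. By homogeneity and compactness of the unit sphere, relations obeying
the one-sided bounds therefore form a bounded set. Finitely many such neighbourhoods cover a
compact `V`, so `u`, and with it `w`, stays bounded, and the preimage of `V` is the continuous
image of a compact subset of `ℂ^ℓ × ℂ^m`.
-/

open Filter Topology

/-- The simplicial cone spanned by the vectors `a i`, `i ∈ I`: all nonnegative linear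
combinations of the `a i` with `i ∈ I`. -/
def cone {n m : ℕ} (a : Fin m → (Fin n → ℝ)) (I : Set (Fin m)) : Set (Fin n → ℝ) :=
  {x | ∃ μ : Fin m → ℝ, (∀ i, 0 ≤ μ i) ∧ (∀ i, i ∉ I → μ i = 0) ∧ x = ∑ i, μ i • a i}

theorem LinearIndepOn.eq_of_sum_smul_eq {ι R M : Type*} [Fintype ι] [Ring R] [AddCommGroup M]
    [Module R M] {v : ι → M} {s : Set ι} (hv : LinearIndepOn R v s) {c d : ι → R}
    (hc : ∀ i ∉ s, c i = 0) (hd : ∀ i ∉ s, d i = 0)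
    (h : ∑ i, c i • v i = ∑ i, d i • v i) : c = d := by
  classical
  have hsum : ∑ i ∈ s.toFinset, (c - d) i • v i = 0 := by
    rw [Finset.sum_subset (Finset.subset_univ _) fun i _ hi => by simp_all]
    simp [sub_smul, Finset.sum_sub_distrib, h]
  funext i
  by_cases hi : i ∈ s
  · exact sub_eq_zero.mp <| linearIndepOn_iff''.mp hv s.toFinset (c - d) (by simp)
      (fun j hj => by simp_all) hsum i (by simpa using hi)
  · rw [hc i hi, hd i hi]

theorem exists_pos_mul_norm_le_of_homogeneous {E : Type*} [NormedAddCommGroup E]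
    [NormedSpace ℝ E] [FiniteDimensional ℝ E] {f : E → ℝ} (hf : Continuous f)
    (hhom : ∀ t : ℝ, 0 ≤ t → ∀ x, f (t • x) = t * f x) (hpos : ∀ x ≠ 0, 0 < f x) :
    ∃ δ > 0, ∀ x, δ * ‖x‖ ≤ f x := by
  have hf0 : f 0 = 0 := by simpa using hhom 0 le_rfl 0
  cases subsingleton_or_nontrivial E with
  | inl _ => exact ⟨1, one_pos, fun x => by simp [Subsingleton.elim x 0, hf0]⟩
  | inr _ =>
    obtain ⟨y, hy, hmin⟩ := (isCompact_sphere (0 : E) 1).exists_isMinOn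
      (NormedSpace.sphere_nonempty.mpr zero_le_one) hf.continuousOn
    have hy0 : y ≠ 0 := ne_zero_of_mem_unit_sphere ⟨y, hy⟩
    refine ⟨f y, hpos y hy0, fun x => ?_⟩
    rcases eq_or_ne x 0 with rfl | hx
    · simp [hf0]
    have hxs : ‖x‖⁻¹ • x ∈ Metric.sphere (0 : E) 1 := by
      simp [norm_smul, hx]
    have hle : f y ≤ ‖x‖⁻¹ * f x := hhom ‖x‖⁻¹ (by positivity) x ▸ hmin hxs
    calc f y * ‖x‖ ≤ ‖x‖⁻¹ * f x * ‖x‖ := by gcongr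
      _ = f x := by field_simp

theorem exists_eventually_le_of_norm_eq_exp_mul {E : Type*} [NormedAddCommGroup E] (y z : E) :
    ∃ L, ∀ᶠ p : E × E in 𝓝 (y, z), ∀ t : ℝ, ‖p.1‖ = Real.exp t * ‖p.2‖ → z ≠ 0 → t ≤ L := by
  by_cases hz : z = 0
  · exact ⟨0, Eventually.of_forall fun _ _ _ h => absurd hz h⟩
  have hratio : ContinuousAt (fun p : E × E => ‖p.1‖ / ‖p.2‖) (y, z) :=
    (continuous_norm.comp continuous_fst).continuousAt.div
      (continuous_norm.comp continuous_snd).continuousAt (norm_ne_zero_iff.mpr hz)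
  have hM : 0 < ‖y‖ / ‖z‖ + 1 := by positivity
  refine ⟨Real.log (‖y‖ / ‖z‖ + 1), ?_⟩
  filter_upwards [hratio.eventually_lt_const (lt_add_one _),
    continuous_snd.continuousAt.eventually_ne hz] with p hlt hp t ht _
  rw [ht, mul_div_assoc, div_self (norm_ne_zero_iff.mpr hp), mul_one] at hlt
  exact ((Real.lt_log_iff_exp_lt hM).mpr hlt).le

theorem exists_eventually_ge_of_norm_eq_exp_mul {E : Type*} [NormedAddCommGroup E] (y z : E) :
    ∃ L, ∀ᶠ p : E × E in 𝓝 (y, z), ∀ t : ℝ, ‖p.1‖ = Real.exp t * ‖p.2‖ → y ≠ 0 → L ≤ t := by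
  obtain ⟨L, hL⟩ := exists_eventually_le_of_norm_eq_exp_mul z y
  refine ⟨-L, (continuous_swap.tendsto (y, z)).eventually hL |>.mono fun p hp t ht hy => ?_⟩
  have ht' : ‖p.2‖ = Real.exp (-t) * ‖p.1‖ := by
    rw [ht, Real.exp_neg, inv_mul_cancel_left₀ (Real.exp_ne_zero t)]
  linarith [hp (-t) ht' hy]

theorem exists_eventually_bounds_of_norm_eq_exp_mul {ι E : Type*} [Finite ι] [NormedAddCommGroup E]
    (v : (ι → E) × (ι → E)) :
    ∃ L, ∀ᶠ q in 𝓝 v, ∀ u : ι → ℝ, (∀ i, ‖q.1 i‖ = Real.exp (u i) * ‖q.2 i‖) →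
      (∀ i, v.2 i ≠ 0 → u i ≤ L) ∧ (∀ i, v.1 i ≠ 0 → -L ≤ u i) := by
  choose Lup hLup using fun i => exists_eventually_le_of_norm_eq_exp_mul (v.1 i) (v.2 i)
  choose Llow hLlow using fun i => exists_eventually_ge_of_norm_eq_exp_mul (v.1 i) (v.2 i)
  obtain ⟨L, hL⟩ := Finite.bddAbove_range fun i => max (Lup i) (-Llow i)
  have hcoord : ∀ i, Tendsto (fun q : (ι → E) × (ι → E) => (q.1 i, q.2 i)) (𝓝 v)
      (𝓝 (v.1 i, v.2 i)) := fun i => ((continuous_apply i).prodMap (continuous_apply i)).tendsto v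
  refine ⟨L, ?_⟩
  filter_upwards [eventually_all.mpr fun i => (hcoord i).eventually (hLup i),
    eventually_all.mpr fun i => (hcoord i).eventually (hLlow i)] with q hup hlow u hu
  have hLi : ∀ i, max (Lup i) (-Llow i) ≤ L := fun i => hL ⟨i, rfl⟩
  exact ⟨fun i hi => (hup i (u i) (hu i) hi).trans ((le_max_left _ _).trans (hLi i)),
    fun i hi => by linarith [hlow i (u i) (hu i) hi, (le_max_right _ _).trans (hLi i)]⟩

section Fan

variable {n m : ℕ} {a : Fin m → Fin n → ℝ}

theorem eq_zero_of_sum_smul_eq_zero_of_cone_inter {I J : Set (Fin m)}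
    (hI : LinearIndepOn ℝ a I) (hJ : LinearIndepOn ℝ a J)
    (hIJ : cone a I ∩ cone a J = cone a (I ∩ J)) {r : Fin m → ℝ}
    (hr : ∑ i, r i • a i = 0) (hrI : ∀ i ∉ I, r i ≤ 0) (hrJ : ∀ i ∉ J, 0 ≤ r i) : r = 0 := by
  have hpos : ∀ i ∉ I, r⁺ i = 0 := fun i hi => posPart_eq_zero.mpr (hrI i hi)
  have hneg : ∀ i ∉ J, r⁻ i = 0 := fun i hi => negPart_eq_zero.mpr (hrJ i hi)
  have hx : ∑ i, r⁺ i • a i = ∑ i, r⁻ i • a i := by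
    rw [← sub_eq_zero, ← Finset.sum_sub_distrib, ← hr]
    refine Finset.sum_congr rfl fun i _ => ?_
    rw [← sub_smul, ← Pi.sub_apply, posPart_sub_negPart]
  obtain ⟨μ, -, hμ, hμx⟩ : ∑ i, r⁺ i • a i ∈ cone a (I ∩ J) :=
    hIJ ▸ ⟨⟨r⁺, fun i => posPart_nonneg _, hpos, rfl⟩, ⟨r⁻, fun i => negPart_nonneg _, hneg, hx⟩⟩
  have hμpos : r⁺ = μ := hI.eq_of_sum_smul_eq hpos (fun i hi => hμ i (fun h => hi h.1)) hμx
  have hμneg : r⁻ = μ := hJ.eq_of_sum_smul_eq hneg (fun i hi => hμ i (fun h => hi h.2)) (hx ▸ hμx)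
  rw [← posPart_sub_negPart r, hμpos, hμneg, sub_self]

theorem exists_norm_le_of_cone_inter {I J : Set (Fin m)}
    (hI : LinearIndepOn ℝ a I) (hJ : LinearIndepOn ℝ a J)
    (hIJ : cone a I ∩ cone a J = cone a (I ∩ J)) (C : ℝ) :
    ∃ B, ∀ u : Fin m → ℝ, ∑ i, u i • a i = 0 → (∀ i ∉ I, u i ≤ C) → (∀ i ∉ J, -C ≤ u i) →
      ‖u‖ ≤ B := by
  classical
  set f : (Fin m → ℝ) → ℝ := fun r =>
    ‖∑ i, r i • a i‖ + ∑ i with i ∉ I, (r i)⁺ + ∑ i with i ∉ J, (r i)⁻ with hf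
  have hf_cont : Continuous f := by fun_prop
  have hf_hom : ∀ t : ℝ, 0 ≤ t → ∀ r, f (t • r) = t * f r := by
    intro t ht r
    have hmul_pos : ∀ x : ℝ, (t * x)⁺ = t * x⁺ := fun x => by
      simp only [posPart_def, mul_max_of_nonneg _ _ ht, mul_zero]
    have hmul_neg : ∀ x : ℝ, (t * x)⁻ = t * x⁻ := fun x => by
      simp only [negPart_def, ← mul_neg, mul_max_of_nonneg _ _ ht, mul_zero]
    simp only [hf, Pi.smul_apply, smul_eq_mul, hmul_pos, hmul_neg, ← Finset.mul_sum, mul_add, ← smul_smul,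
      ← Finset.smul_sum, norm_smul, Real.norm_of_nonneg ht]
  have hf_pos : ∀ r ≠ 0, 0 < f r := by
    intro r hr
    refine lt_of_le_of_ne (by positivity) fun h => hr ?_
    obtain ⟨⟨hsum, hI0⟩, hJ0⟩ := (add_eq_zero_iff_of_nonneg (by positivity) (by positivity)).mp
      h.symm |>.imp_left (add_eq_zero_iff_of_nonneg (by positivity) (by positivity)).mp
    rw [Finset.sum_eq_zero_iff_of_nonneg fun _ _ => posPart_nonneg _] at hI0
    rw [Finset.sum_eq_zero_iff_of_nonneg fun _ _ => negPart_nonneg _] at hJ0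
    exact eq_zero_of_sum_smul_eq_zero_of_cone_inter hI hJ hIJ (norm_eq_zero.mp hsum)
      (fun i hi => posPart_eq_zero.mp (hI0 i (by simpa using hi)))
      (fun i hi => negPart_eq_zero.mp (hJ0 i (by simpa using hi)))
  obtain ⟨δ, hδ, hδf⟩ := exists_pos_mul_norm_le_of_homogeneous hf_cont hf_hom hf_pos
  refine ⟨(∑ i with i ∉ I, C⁺ + ∑ i with i ∉ J, C⁺) / δ, fun u hu huI huJ => ?_⟩
  have hfu : f u ≤ ∑ i with i ∉ I, C⁺ + ∑ i with i ∉ J, C⁺ := by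
    simp only [hf, hu, norm_zero, zero_add]
    gcongr with i hi i hi
    · exact posPart_mono (huI i (by simpa using hi))
    · exact (negPart_anti (huJ i (by simpa using hi))).trans_eq (negPart_neg C)
  rw [le_div_iff₀' hδ]
  exact (hδf u).trans hfu

theorem IsCompact.exists_norm_le_of_norm_eq_exp_mul {K : Set (Set (Fin m))}
    (hInd : ∀ I ∈ K, LinearIndepOn ℝ a I)
    (hInter : ∀ I ∈ K, ∀ J ∈ K, cone a I ∩ cone a J = cone a (I ∩ J))
    {V : Set ((Fin m → ℂ) × (Fin m → ℂ))} (hV : IsCompact V)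
    (hVK : V ⊆ {z | {i | z i = 0} ∈ K} ×ˢ {z | {i | z i = 0} ∈ K}) :
    ∃ B, ∀ q ∈ V, ∀ u : Fin m → ℝ, ∑ i, u i • a i = 0 →
      (∀ i, ‖q.1 i‖ = Real.exp (u i) * ‖q.2 i‖) → ‖u‖ ≤ B := by
  refine hV.induction_on (p := fun s => ∃ B, ∀ q ∈ s, ∀ u : Fin m → ℝ, ∑ i, u i • a i = 0 →
      (∀ i, ‖q.1 i‖ = Real.exp (u i) * ‖q.2 i‖) → ‖u‖ ≤ B) ?_ ?_ ?_ ?_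
  · exact ⟨0, fun _ h => h.elim⟩
  · rintro s t hst ⟨B, hB⟩
    exact ⟨B, fun q hq => hB q (hst hq)⟩
  · rintro s t ⟨B, hB⟩ ⟨B', hB'⟩
    refine ⟨max B B', fun q hq u hu hqu => hq.elim (fun hq => ?_) (fun hq => ?_)⟩
    · exact (hB q hq u hu hqu).trans (le_max_left _ _)
    · exact (hB' q hq u hu hqu).trans (le_max_right _ _)
  · intro v hv
    obtain ⟨hJ, hI⟩ := hVK hv
    obtain ⟨L, hL⟩ := exists_eventually_bounds_of_norm_eq_exp_mul v
    obtain ⟨B, hB⟩ := exists_norm_le_of_cone_inter (hInd _ hI) (hInd _ hJ) (hInter _ hI _ hJ) L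
    refine ⟨_, mem_nhdsWithin_of_mem_nhds hL, B, fun q hq u hu hqu => ?_⟩
    obtain ⟨hup, hlow⟩ := hq u hqu
    exact hB u hu hup hlow

end Fan

theorem CPsi_action_on_UK_is_proper_general (n m l : ℕ)
    (a : Fin m → (Fin n → ℝ)) (K : Set (Set (Fin m)))
    (hInd : ∀ I ∈ K, LinearIndependent ℝ (fun i : I => a i.1))
    (hInter : ∀ I ∈ K, ∀ J ∈ K, cone a I ∩ cone a J = cone a (I ∩ J))
    (Ψ : (Fin l → ℂ) →ₗ[ℂ] (Fin m → ℂ))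
    (hΨinj : Function.Injective fun w : Fin l → ℂ => fun i => (Ψ w i).re)
    (hΨker : ∀ w : Fin l → ℂ, ∑ i, (Ψ w i).re • a i = 0) :
    ∀ V : Set ((Fin m → ℂ) × (Fin m → ℂ)),
      V ⊆ {z | {i | z i = 0} ∈ K} ×ˢ {z | {i | z i = 0} ∈ K} →
      IsCompact V →
      IsCompact {p : (Fin m → ℂ) × (Fin m → ℂ) |
        (∃ w : Fin l → ℂ, ∀ i, p.1 i = Complex.exp (Ψ w i)) ∧
        {i | p.2 i = 0} ∈ K ∧
        ((fun i => p.1 i * p.2 i), p.2) ∈ V} := by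
  intro V hVK hV
  set E : (Fin l → ℂ) → (Fin m → ℂ) := fun w i => Complex.exp (Ψ w i)
  have hE : Continuous E := by fun_prop
  set reΨ : (Fin l → ℂ) →ₗ[ℝ] (Fin m → ℝ) :=
    (LinearMap.pi fun i => Complex.reLm ∘ₗ LinearMap.proj i) ∘ₗ Ψ.restrictScalars ℝ
  have hreΨ : IsClosedEmbedding reΨ :=
    reΨ.isClosedEmbedding_of_injective (LinearMap.ker_eq_bot.mpr hΨinj)
  obtain ⟨B, hB⟩ := hV.exists_norm_le_of_norm_eq_exp_mul hInd hInter hVK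
  set T := {x : (Fin l → ℂ) × (Fin m → ℂ) | (E x.1 * x.2, x.2) ∈ V}
  have hT : IsCompact T := by
    refine ((hreΨ.isCompact_preimage (isCompact_closedBall 0 B)).prod
      (hV.image continuous_snd)).of_isClosed_subset ?_ fun x hx => ⟨?_, _, hx, rfl⟩
    · exact hV.isClosed.preimage (by fun_prop)
    · exact mem_closedBall_zero_iff.mpr <| hB _ hx _ (hΨker x.1) fun i => by
        simp [E, Complex.norm_exp, reΨ]
  convert hT.image (hE.prodMap continuous_id) using 1
  ext ⟨g, z⟩
  constructor
  · rintro ⟨⟨w, hw⟩, -, hgz⟩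
    obtain rfl : g = E w := funext hw
    exact ⟨(w, z), hgz, rfl⟩
  · rintro ⟨⟨w, z⟩, hwz, ⟨⟩⟩
    exact ⟨⟨w, fun _ => rfl⟩, (hVK hwz).2, hwz⟩

/-- If `(K; a₁, …, a_m)` underlies a complete simplicial fan in ℝⁿ and
`m - n = 2ℓ`, then the action of `C_Ψ = exp Ψ(ℂ^ℓ)` on `U(K)` is proper: the map
`C_Ψ × U(K) → U(K) × U(K)`, `(g, z) ↦ (g·z, z)`, has compact preimages of compact sets. -/
theorem CPsi_action_on_UK_is_proper (n m l : ℕ) (hn : 1 ≤ n) (hl : 1 ≤ l)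
    (hml : m = n + 2 * l)
    (a : Fin m → (Fin n → ℝ)) (K : Set (Set (Fin m)))
    (hKempty : ∅ ∈ K) (hKdown : ∀ I ∈ K, ∀ J ⊆ I, J ∈ K)
    (hInd : ∀ I ∈ K, LinearIndependent ℝ (fun i : I => a i.1))
    (hInter : ∀ I ∈ K, ∀ J ∈ K, cone a I ∩ cone a J = cone a (I ∩ J))
    (hCover : (⋃ I ∈ K, cone a I) = Set.univ)
    (Ψ : (Fin l → ℂ) →ₗ[ℂ] (Fin m → ℂ))
    (hΨinj : Function.Injective fun w : Fin l → ℂ => fun i => (Ψ w i).re)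
    (hΨker : ∀ w : Fin l → ℂ, ∑ i, (Ψ w i).re • a i = 0) :
    ∀ V : Set ((Fin m → ℂ) × (Fin m → ℂ)),
      V ⊆ {z | {i | z i = 0} ∈ K} ×ˢ {z | {i | z i = 0} ∈ K} →
      IsCompact V →
      IsCompact {p : (Fin m → ℂ) × (Fin m → ℂ) |
        (∃ w : Fin l → ℂ, ∀ i, p.1 i = Complex.exp (Ψ w i)) ∧
        {i | p.2 i = 0} ∈ K ∧
        ((fun i => p.1 i * p.2 i), p.2) ∈ V} :=
  CPsi_action_on_UK_is_proper_general n m l a K hInd hInter Ψ hΨinj hΨker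
end

section
/- Suppose (K; a_1,…,a_m) underlies a complete simplicial fan in ℝ^n, N has rank k, and m − n − k = 2ℓ. Then the inclusion Z_K ↪ U(K) induces a homeomorphism between the orbit space Z_K/T(N) and the orbit space U(K)/C_Ω(N), both equipped with the quotient topology. -/
/-- The moment-angle complex `Z_K ⊆ ℂ^m`. -/
def momentAngleComplex (m : ℕ) (K : Set (Set (Fin m))) : Set (Fin m → ℂ) :=
  {z | (∀ i, ‖z i‖ ≤ 1) ∧ {i | ‖z i‖ < 1} ∈ K}

/-- The coordinate subspace arrangement complement `U(K) ⊆ ℂ^m`. -/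
def UK (m : ℕ) (K : Set (Set (Fin m))) : Set (Fin m → ℂ) :=
  {z | {i | z i = 0} ∈ K}

/-- The real span `N_ℝ ⊆ ℝ^m` of a subgroup `N ⊆ ℤ^m`. -/
def NR (m : ℕ) (N : AddSubgroup (Fin m → ℤ)) : Submodule ℝ (Fin m → ℝ) :=
  Submodule.span ℝ ((fun x : Fin m → ℤ => fun i => (x i : ℝ)) '' (N : Set (Fin m → ℤ)))

/-- The complex span `N_ℂ ⊆ ℂ^m` of a subgroup `N ⊆ ℤ^m`. -/
noncomputable def NC (m : ℕ) (N : AddSubgroup (Fin m → ℤ)) : Submodule ℂ (Fin m → ℂ) :=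
  Submodule.span ℂ ((fun x : Fin m → ℤ => fun i => (x i : ℂ)) '' (N : Set (Fin m → ℤ)))

/-- The `T(N)`-orbit relation on the moment-angle complex `Z_K`.  The orbit space
`Z_K / T(N)` with the quotient topology is `Quot (TNOrbitRel m K N)`. -/
def TNOrbitRel (m : ℕ) (K : Set (Set (Fin m))) (N : AddSubgroup (Fin m → ℤ))
    (z w : momentAngleComplex m K) : Prop :=
  ∃ x : Fin m → ℝ, x ∈ NR m N ∧
    ∀ i, (w : Fin m → ℂ) i =
      Complex.exp (2 * (Real.pi : ℂ) * Complex.I * (x i : ℂ)) * (z : Fin m → ℂ) i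

/-- The `C_Ω(N)`-orbit relation on `U(K)`.  The orbit space `U(K) / C_Ω(N)` with the quotient
topology is `Quot (COmegaNOrbitRel m l K N Ω)`. -/
def COmegaNOrbitRel (m l : ℕ) (K : Set (Set (Fin m))) (N : AddSubgroup (Fin m → ℤ))
    (Ω : (Fin l → ℂ) →ₗ[ℂ] (Fin m → ℂ)) (z w : UK m K) : Prop :=
  ∃ u : Fin m → ℂ, u ∈ NC m N ∧ ∃ v : Fin l → ℂ,
    ∀ i, (w : Fin m → ℂ) i =
      Complex.exp (2 * (Real.pi : ℂ) * Complex.I * u i + Ω v i) * (z : Fin m → ℂ) i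

/-!
Every point `z ∈ U(K)` is moved into `Z_K` by `exp ζ` for a unique `ζ` in the real subspace
`W = N_ℝ + Ω(ℂ^ℓ)`. Existence: `Re` maps `W` isomorphically onto the linear relations among the
`a i` (a dimension count), and the star of the face `{i | z i = 0}` of the complete fan covers
`ℝⁿ` modulo the span of that face, which provides a relation rescaling `z` into `Z_K`.
Uniqueness: a relation whose positive and negative parts are supported on faces vanishes, since
the two cones meet only in `0`. As `C_Ω(N) = exp(W) · T(N)`, the normal form `z ↦ exp(ζ z) · z`
descends to an inverse of the map induced by `Z_K ⊆ U(K)`; it is continuous because `ζ z` stays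
bounded as `z` converges in `U(K)`, and a limit of such exponents is again one.
-/

open Filter Topology Module

structure IsSimplicialFan {n m : ℕ} (K : Set (Set (Fin m))) (a : Fin m → Fin n → ℝ) : Prop where
  down_closed : ∀ I ∈ K, ∀ J ⊆ I, J ∈ K
  linearIndependent : ∀ I ∈ K, LinearIndependent ℝ (fun i : I => a i.1)
  cone_inter : ∀ I ∈ K, ∀ J ∈ K, cone a I ∩ cone a J = cone a (I ∩ J)

section Cone

open scoped Classical

section FiniteSum

variable {ι R M : Type*} [Fintype ι] {v : ι → M} {I : Set ι} {μ : ι → R}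

lemma sum_smul_eq_sum_subtype [Semiring R] [AddCommMonoid M] [Module R M]
    (hμ : ∀ i ∉ I, μ i = 0) : ∑ i, μ i • v i = ∑ i : I, μ i • v i := by
  rw [Finset.sum_set_coe (f := fun i => μ i • v i)]
  exact (Finset.sum_subset (Finset.subset_univ _) fun i _ hi => by
    rw [hμ i (by simpa using hi), zero_smul]).symm

lemma eq_zero_of_sum_smul_eq_zero [Ring R] [AddCommGroup M] [Module R M]
    (hI : LinearIndependent R (fun i : I => v i.1)) (hμ : ∀ i ∉ I, μ i = 0)
    (hsum : ∑ i, μ i • v i = 0) : μ = 0 := by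
  funext i
  by_cases hi : i ∈ I
  · rw [sum_smul_eq_sum_subtype hμ] at hsum
    exact Fintype.linearIndependent_iff.mp hI (fun j => μ j) hsum ⟨i, hi⟩
  · exact hμ i hi

end FiniteSum

variable {n m : ℕ} {a : Fin m → Fin n → ℝ} {I : Set (Fin m)}

lemma cone_empty : cone a ∅ = {0} := by
  ext x
  constructor
  · rintro ⟨μ, -, hμ, rfl⟩
    simp [show μ = 0 from funext fun i => hμ i (Set.notMem_empty i)]
  · rintro rfl
    exact ⟨0, fun _ => le_rfl, fun _ _ => rfl, by simp⟩

lemma cone_eq_image : cone a I =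
    Fintype.linearCombination ℝ (fun i : I => a i) '' {ν | ∀ i, 0 ≤ ν i} := by
  ext x
  constructor
  · rintro ⟨μ, hμ0, hμ, rfl⟩
    exact ⟨fun i => μ i, fun i => hμ0 i, by
      rw [Fintype.linearCombination_apply, sum_smul_eq_sum_subtype hμ]⟩
  · rintro ⟨ν, hν0, rfl⟩
    let μ : Fin m → ℝ := fun j => if h : j ∈ I then ν ⟨j, h⟩ else 0
    have hμ : ∀ i ∉ I, μ i = 0 := fun i hi => dif_neg hi
    refine ⟨μ, fun j => ?_, hμ, ?_⟩
    · by_cases h : j ∈ I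
      · simpa [μ, h] using hν0 ⟨j, h⟩
      · simp [μ, h]
    · rw [Fintype.linearCombination_apply, sum_smul_eq_sum_subtype hμ]
      simp [μ]

lemma isClosed_cone (hI : LinearIndependent ℝ (fun i : I => a i.1)) : IsClosed (cone a I) := by
  rw [cone_eq_image]
  refine (LinearMap.isClosedEmbedding_of_injective
    (LinearMap.ker_eq_bot.2 hI.fintypeLinearCombination_injective)).isClosedMap _ ?_
  simp only [Set.ofPred_forall]
  exact isClosed_iInter fun i => isClosed_le continuous_const (continuous_apply i)

lemma surjective_linearCombination_of_cover {K : Set (Set (Fin m))}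
    (hcover : ⋃ I ∈ K, cone a I = Set.univ) :
    Function.Surjective (Fintype.linearCombination ℝ a) := by
  intro y
  obtain ⟨I, -, μ, -, -, rfl⟩ := Set.mem_iUnion₂.mp (hcover ▸ Set.mem_univ y)
  exact ⟨μ, Fintype.linearCombination_apply _ _ _⟩

end Cone

namespace IsSimplicialFan

variable {n m : ℕ} {K : Set (Set (Fin m))} {a : Fin m → Fin n → ℝ}

/-- Splitting `h = h⁺ - h⁻`, the vector `∑ h⁺ a = ∑ h⁻ a` lies in two cones meeting only in `0`. -/
lemma eq_zero_of_sign_sets_mem (hK : IsSimplicialFan K a) {h : Fin m → ℝ}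
    (hsum : ∑ i, h i • a i = 0) (hpos : {i | 0 < h i} ∈ K) (hneg : {i | h i < 0} ∈ K) :
    h = 0 := by
  have hpos_supp : ∀ i ∉ {i | 0 < h i}, h⁺ i = 0 := fun i hi =>
    posPart_eq_zero.2 (not_lt.1 hi)
  have hneg_supp : ∀ i ∉ {i | h i < 0}, h⁻ i = 0 := fun i hi =>
    negPart_eq_zero.2 (not_lt.1 hi)
  have hsplit : ∑ i, h⁺ i • a i = ∑ i, h⁻ i • a i := by
    rw [← sub_eq_zero, ← Finset.sum_sub_distrib, ← hsum]
    refine Finset.sum_congr rfl fun i _ => ?_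
    rw [← sub_smul, ← Pi.sub_apply, posPart_sub_negPart]
  have hmem : ∑ i, h⁺ i • a i ∈ cone a ({i | 0 < h i} ∩ {i | h i < 0}) := by
    rw [← hK.cone_inter _ hpos _ hneg]
    exact ⟨⟨h⁺, fun i => posPart_nonneg _, hpos_supp, rfl⟩,
      hsplit ▸ ⟨h⁻, fun i => negPart_nonneg _, hneg_supp, rfl⟩⟩
  have hdisj : {i | 0 < h i} ∩ {i | h i < 0} = ∅ :=
    Set.eq_empty_of_forall_notMem fun i hi => lt_asymm (show 0 < h i from hi.1) hi.2
  rw [hdisj, cone_empty, Set.mem_singleton_iff] at hmem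
  have h1 := eq_zero_of_sum_smul_eq_zero (hK.linearIndependent _ hpos) hpos_supp hmem
  have h2 := eq_zero_of_sum_smul_eq_zero (hK.linearIndependent _ hneg) hneg_supp (hsplit ▸ hmem)
  rw [← posPart_sub_negPart h, h1, h2, sub_zero]

lemma subset_of_indicator_mem_cone (hK : IsSimplicialFan K a) {Z I : Set (Fin m)} (hZ : Z ∈ K)
    (hI : I ∈ K) (hp : ∑ i, Z.indicator (1 : Fin m → ℝ) i • a i ∈ cone a I) : Z ⊆ I := by
  have hpZ : ∑ i, Z.indicator (1 : Fin m → ℝ) i • a i ∈ cone a Z :=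
    ⟨Z.indicator 1, fun i => Set.indicator_nonneg (fun _ _ => zero_le_one) i,
      fun i hi => Set.indicator_of_notMem hi _, rfl⟩
  obtain ⟨κ, -, hκ, hκsum⟩ := (hK.cone_inter _ hZ _ hI).subset ⟨hpZ, hp⟩
  have hdiff := eq_zero_of_sum_smul_eq_zero (hK.linearIndependent _ hZ) (μ := Z.indicator 1 - κ)
    (fun i hi => by simp [Set.indicator_of_notMem hi, hκ i fun h => hi h.1])
    (by simp only [Pi.sub_apply, sub_smul, Finset.sum_sub_distrib, hκsum, sub_self])
  intro i hi
  by_contra hiI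
  have := congrFun hdiff i
  simp [Set.indicator_of_mem hi, hκ i fun h => hiI h.2] at this

/-- A cone containing `p + ε v`, for `p` in the relative interior of `cone a Z` and small `ε > 0`,
contains `p` because the other cones are closed, hence contains `cone a Z`. -/
lemma exists_mem_star (hK : IsSimplicialFan K a) (hcover : ⋃ I ∈ K, cone a I = Set.univ)
    {Z : Set (Fin m)} (hZ : Z ∈ K) (v : Fin n → ℝ) :
    ∃ I ∈ K, Z ⊆ I ∧ ∃ c : Fin m → ℝ,
      (∀ i ∉ I, c i = 0) ∧ (∀ i ∉ Z, 0 ≤ c i) ∧ v = ∑ i, c i • a i := by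
  set p := ∑ i, Z.indicator (1 : Fin m → ℝ) i • a i
  set F := ⋃ I ∈ {I ∈ K | p ∉ cone a I}, cone a I
  have hF : IsClosed F := (Set.toFinite _).isClosed_biUnion fun I hI =>
    isClosed_cone (hK.linearIndependent I hI.1)
  have hpF : p ∉ F := by
    simp only [F, Set.mem_iUnion]
    exact fun ⟨I, ⟨_, hI⟩, hpI⟩ => hI hpI
  have hnear : ∀ᶠ ε in 𝓝[>] (0 : ℝ), p + ε • v ∉ F := by
    refine nhdsWithin_le_nhds (ContinuousAt.preimage_mem_nhds ?_ (hF.isOpen_compl.mem_nhds ?_))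
    · fun_prop
    · simpa using hpF
  obtain ⟨ε, hεF, hε⟩ := (hnear.and self_mem_nhdsWithin).exists
  obtain ⟨I, hI, hpεI⟩ := Set.mem_iUnion₂.mp (hcover ▸ Set.mem_univ (p + ε • v))
  have hpI : p ∈ cone a I := by
    by_contra hpI
    exact hεF (Set.mem_biUnion ⟨hI, hpI⟩ hpεI)
  have hZI := hK.subset_of_indicator_mem_cone hZ hI hpI
  obtain ⟨μ, hμ0, hμ, hμsum⟩ := hpεI
  refine ⟨I, hI, hZI, ε⁻¹ • (μ - Z.indicator 1), fun i hi => ?_, fun i hi => ?_, ?_⟩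
  · simp [hμ i hi, Set.indicator_of_notMem fun h => hi (hZI h)]
  · simpa [Set.indicator_of_notMem hi] using mul_nonneg (inv_nonneg.2 (le_of_lt hε)) (hμ0 i)
  · simp only [Pi.smul_apply, Pi.sub_apply, smul_eq_mul, mul_smul, sub_smul, ← Finset.smul_sum,
      Finset.sum_sub_distrib, ← hμsum]
    change v = ε⁻¹ • (p + ε • v - p)
    rw [add_sub_cancel_left, inv_smul_smul₀ hε.ne']

end IsSimplicialFan

section Exponents

variable {n m l : ℕ} {a : Fin m → Fin n → ℝ} {N : AddSubgroup (Fin m → ℤ)}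
  {Ω : (Fin l → ℂ) →ₗ[ℂ] (Fin m → ℂ)}

lemma NR_le_ker (hNker : ∀ x ∈ N, ∑ i, (x i : ℝ) • a i = 0) :
    NR m N ≤ LinearMap.ker (Fintype.linearCombination ℝ a) :=
  Submodule.span_le.2 fun _ ⟨x, hx, hx'⟩ => by
    subst hx'
    simpa [Fintype.linearCombination_apply] using hNker x hx

lemma re_mem_NR_and_im_mem_NR {u : Fin m → ℂ} (hu : u ∈ NC m N) :
    (fun i => (u i).re) ∈ NR m N ∧ (fun i => (u i).im) ∈ NR m N := by
  induction hu using Submodule.span_induction with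
  | mem u hu =>
    obtain ⟨x, hx, rfl⟩ := hu
    constructor
    · have hx' : (fun i => (x i : ℝ)) ∈ NR m N := Submodule.subset_span ⟨x, hx, rfl⟩
      convert hx' using 1; ext; simp
    · convert (NR m N).zero_mem using 1; ext; simp
  | zero => exact ⟨(NR m N).zero_mem, (NR m N).zero_mem⟩
  | add u v _ _ hu hv =>
    constructor
    · convert add_mem hu.1 hv.1 using 1; ext; simp
    · convert add_mem hu.2 hv.2 using 1; ext; simp
  | smul c u _ hu =>
    constructor
    · convert sub_mem (Submodule.smul_mem _ c.re hu.1) (Submodule.smul_mem _ c.im hu.2) using 1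
      ext; simp
    · convert add_mem (Submodule.smul_mem _ c.re hu.2) (Submodule.smul_mem _ c.im hu.1) using 1
      ext; simp

lemma ofReal_mem_NC {x : Fin m → ℝ} (hx : x ∈ NR m N) : (fun i => (x i : ℂ)) ∈ NC m N := by
  induction hx using Submodule.span_induction with
  | mem x hx =>
    obtain ⟨g, hg, rfl⟩ := hx
    exact Submodule.subset_span ⟨g, hg, by ext; simp⟩
  | zero => exact (NC m N).zero_mem
  | add x y _ _ hx hy => convert add_mem hx hy using 1; ext; simp
  | smul c x _ hx => convert (NC m N).smul_mem (c : ℂ) hx using 1; ext; simp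

noncomputable def realExponents (N : AddSubgroup (Fin m → ℤ))
    (Ω : (Fin l → ℂ) →ₗ[ℂ] (Fin m → ℂ)) : Submodule ℝ (Fin m → ℂ) :=
  (NR m N).map (LinearMap.compLeft Complex.ofRealAm.toLinearMap (Fin m)) ⊔
    (LinearMap.range Ω).restrictScalars ℝ

lemma mem_realExponents {ζ : Fin m → ℂ} :
    ζ ∈ realExponents N Ω ↔ ∃ x ∈ NR m N, ∃ v, ζ = (fun i => (x i : ℂ)) + Ω v := by
  simp only [realExponents, Submodule.mem_sup, Submodule.mem_map, Submodule.restrictScalars_mem,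
    LinearMap.mem_range]
  constructor
  · rintro ⟨_, ⟨x, hx, rfl⟩, _, ⟨v, rfl⟩, rfl⟩
    exact ⟨x, hx, v, rfl⟩
  · rintro ⟨x, hx, v, rfl⟩
    exact ⟨_, ⟨x, hx, rfl⟩, _, ⟨v, rfl⟩, rfl⟩

lemma sum_re_smul_eq_zero_of_mem_realExponents (hNker : ∀ x ∈ N, ∑ i, (x i : ℝ) • a i = 0)
    (hΩker : ∀ w : Fin l → ℂ, ∑ i, (Ω w i).re • a i = 0) {ζ : Fin m → ℂ}
    (hζ : ζ ∈ realExponents N Ω) : ∑ i, (ζ i).re • a i = 0 := by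
  obtain ⟨x, hx, v, rfl⟩ := mem_realExponents.1 hζ
  have hxker := NR_le_ker hNker hx
  rw [LinearMap.mem_ker, Fintype.linearCombination_apply] at hxker
  simp [add_smul, Finset.sum_add_distrib, hxker, hΩker v]

lemma eq_zero_of_re_apply_mem_NR
    (hΩinj : Function.Injective fun w : Fin l → ℂ => (NR m N).mkQ (fun i => (Ω w i).re))
    {v : Fin l → ℂ} (hv : (fun i => (Ω v i).re) ∈ NR m N) : v = 0 :=
  hΩinj <| by
    simp only [map_zero, Pi.zero_apply, Complex.zero_re]
    exact (Submodule.Quotient.mk_eq_zero _).2 hv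

lemma eq_zero_of_mem_realExponents_of_re_eq_zero
    (hΩinj : Function.Injective fun w : Fin l → ℂ => (NR m N).mkQ (fun i => (Ω w i).re))
    {ζ : Fin m → ℂ} (hζ : ζ ∈ realExponents N Ω) (hre : ∀ i, (ζ i).re = 0) : ζ = 0 := by
  obtain ⟨x, hx, v, rfl⟩ := mem_realExponents.1 hζ
  have hv : v = 0 := eq_zero_of_re_apply_mem_NR hΩinj <| by
    convert neg_mem hx using 1
    ext i
    simpa [eq_neg_iff_add_eq_zero, add_comm] using hre i
  have hx0 : x = 0 := funext fun i => by simpa [hv] using hre i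
  ext i
  simp [hv, hx0]

/-- A dimension count: `N_ℝ` and `Re Ω(ℂ^ℓ)` are independent subspaces of dimensions `k` and
`2ℓ` inside the kernel of `a`, which has dimension `m - n = k + 2ℓ`. -/
lemma exists_mem_realExponents_re_eq {k : ℕ} (hml : m = n + k + 2 * l)
    (hA : Function.Surjective (Fintype.linearCombination ℝ a))
    (hNker : ∀ x ∈ N, ∑ i, (x i : ℝ) • a i = 0) (hNrank : finrank ℝ (NR m N) = k)
    (hΩinj : Function.Injective fun w : Fin l → ℂ => (NR m N).mkQ (fun i => (Ω w i).re))
    (hΩker : ∀ w : Fin l → ℂ, ∑ i, (Ω w i).re • a i = 0)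
    {h : Fin m → ℝ} (hh : ∑ i, h i • a i = 0) :
    ∃ ζ ∈ realExponents N Ω, ∀ i, (ζ i).re = h i := by
  set A := Fintype.linearCombination ℝ a
  set R := (LinearMap.compLeft Complex.reLm (Fin m)).comp (Ω.restrictScalars ℝ)
  have hR : Function.Injective R := fun v w hvw => hΩinj (congrArg (NR m N).mkQ hvw)
  have hdisj : NR m N ⊓ LinearMap.range R = ⊥ := by
    refine eq_bot_iff.2 fun x ⟨hx, v, hv⟩ => ?_
    simp [← hv, eq_zero_of_re_apply_mem_NR hΩinj (hv ▸ hx : R v ∈ NR m N)]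
  have hle : NR m N ⊔ LinearMap.range R ≤ LinearMap.ker A := by
    refine sup_le (NR_le_ker hNker) ?_
    rintro _ ⟨v, rfl⟩
    simpa [A, Fintype.linearCombination_apply, R] using hΩker v
  have hker : finrank ℝ (LinearMap.ker A) = k + 2 * l := by
    have := LinearMap.finrank_range_add_finrank_ker A
    rw [LinearMap.range_eq_top.2 hA, finrank_top] at this
    simp only [finrank_pi, Fintype.card_fin] at this
    omega
  have hsup : finrank ℝ ↥(NR m N ⊔ LinearMap.range R) = k + 2 * l := by
    have := Submodule.finrank_sup_add_finrank_inf_eq (NR m N) (LinearMap.range R)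
    rw [hdisj, finrank_bot, add_zero, hNrank, LinearMap.finrank_range_of_inj hR,
      finrank_pi_fintype] at this
    simpa [Complex.finrank_real_complex, mul_comm] using this
  obtain ⟨x, hx, _, ⟨v, rfl⟩, hxv⟩ := Submodule.mem_sup.1 <|
    (Submodule.eq_of_le_of_finrank_le hle (by rw [hker, hsup])).symm ▸
      (show h ∈ LinearMap.ker A by simpa [A, Fintype.linearCombination_apply] using hh)
  exact ⟨_, mem_realExponents.2 ⟨x, hx, v, rfl⟩, fun i => by simp [← hxv, R]⟩

end Exponents

section ExpAction

variable {m : ℕ}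

noncomputable def expAct (ζ z : Fin m → ℂ) : Fin m → ℂ := fun i => Complex.exp (ζ i) * z i

lemma norm_expAct_apply (ζ z : Fin m → ℂ) (i : Fin m) :
    ‖expAct ζ z i‖ = Real.exp (ζ i).re * ‖z i‖ := by
  rw [expAct, norm_mul, Complex.norm_exp]

lemma expAct_add (ζ ξ z : Fin m → ℂ) : expAct (ζ + ξ) z = expAct ζ (expAct ξ z) := by
  ext i
  simp [expAct, Complex.exp_add, mul_assoc]

lemma expAct_zero (z : Fin m → ℂ) : expAct 0 z = z := by
  ext i
  simp [expAct]

lemma continuous_expAct : Continuous fun p : (Fin m → ℂ) × (Fin m → ℂ) => expAct p.1 p.2 := by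
  unfold expAct
  fun_prop

end ExpAction

section MomentAngleComplex

variable {m : ℕ} {K : Set (Set (Fin m))}

lemma momentAngleComplex_subset_UK (hdown : ∀ I ∈ K, ∀ J ⊆ I, J ∈ K) :
    momentAngleComplex m K ⊆ UK m K := fun z hz =>
  hdown _ hz.2 _ fun i (hi : z i = 0) => by simp [hi]

lemma isClosed_momentAngleComplex (hdown : ∀ I ∈ K, ∀ J ⊆ I, J ∈ K) :
    IsClosed (momentAngleComplex m K) := by
  have : momentAngleComplex m K =
      ⋃ I ∈ K, {z | ∀ i, ‖z i‖ ≤ 1} ∩ ⋂ i ∈ Iᶜ, {z : Fin m → ℂ | ‖z i‖ = 1} := by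
    ext z
    simp only [momentAngleComplex, Set.mem_ofPred_eq, Set.mem_iUnion, Set.mem_inter_iff,
      Set.mem_iInter, Set.mem_compl_iff]
    constructor
    · exact fun ⟨hle, hK⟩ => ⟨_, hK, hle, fun i hi => le_antisymm (hle i) (not_lt.1 hi)⟩
    · exact fun ⟨I, hI, hle, heq⟩ => ⟨hle, hdown I hI _ fun i (hi : ‖z i‖ < 1) =>
        by_contra fun hiI => hi.ne (heq i hiI)⟩
  rw [this]
  refine (Set.toFinite K).isClosed_biUnion fun I _ => IsClosed.inter ?_ ?_
  · simp only [Set.ofPred_forall]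
    exact isClosed_iInter fun i => isClosed_le (continuous_apply i).norm continuous_const
  · exact isClosed_biInter fun i _ => isClosed_eq (continuous_apply i).norm continuous_const

lemma sign_sets_mem_of_tendsto (hdown : ∀ I ∈ K, ∀ J ⊆ I, J ∈ K) {zs : ℕ → Fin m → ℂ}
    {z : Fin m → ℂ} (hz : Tendsto zs atTop (𝓝 z)) (hzU : z ∈ UK m K) {s : ℕ → ℝ}
    (hs : Tendsto s atTop atTop) {η : ℕ → Fin m → ℂ} {η₀ : Fin m → ℂ} (hη : Tendsto η atTop (𝓝 η₀))
    (hmem : ∀ j, expAct (s j • η j) (zs j) ∈ momentAngleComplex m K) :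
    {i | 0 < (η₀ i).re} ∈ K ∧ {i | (η₀ i).re < 0} ∈ K := by
  have hnorm : ∀ j i,
      ‖expAct (s j • η j) (zs j) i‖ = Real.exp (s j * (η j i).re) * ‖zs j i‖ := fun j i => by
    simp [norm_expAct_apply]
  have hre : ∀ i, Tendsto (fun j => (η j i).re) atTop (𝓝 (η₀ i).re) := fun i =>
    (Complex.continuous_re.tendsto _).comp (tendsto_pi_nhds.1 hη i)
  have hzi : ∀ i, Tendsto (fun j => ‖zs j i‖) atTop (𝓝 ‖z i‖) := fun i =>
    (tendsto_pi_nhds.1 hz i).norm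
  constructor
  · refine hdown _ hzU _ fun i (hi : 0 < (η₀ i).re) => norm_le_zero_iff.1 ?_
    have hto := hs.atTop_mul_pos hi (hre i)
    refine le_of_tendsto_of_tendsto (hzi i)
      (Real.tendsto_exp_atBot.comp (tendsto_neg_atTop_atBot.comp hto)) (Eventually.of_forall
        fun j => ?_)
    rw [Function.comp_apply, Function.comp_apply, Real.exp_neg, inv_eq_one_div,
      le_div_iff₀' (Real.exp_pos _), ← hnorm]
    exact (hmem j).1 i
  · have hlt : ∀ i, (η₀ i).re < 0 → ∀ᶠ j in atTop, ‖expAct (s j • η j) (zs j) i‖ < 1 :=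
      fun i hi => by
        simp_rw [hnorm]
        have := (Real.tendsto_exp_atBot.comp (hs.atTop_mul_neg hi (hre i))).mul (hzi i)
        rw [zero_mul] at this
        exact this.eventually_lt_const zero_lt_one
    obtain ⟨j, hj⟩ : ∃ j, ∀ i, (η₀ i).re < 0 → ‖expAct (s j • η j) (zs j) i‖ < 1 :=
      (eventually_all.2 fun i => by
        by_cases hi : (η₀ i).re < 0
        · exact (hlt i hi).mono fun j hj _ => hj
        · exact Eventually.of_forall fun j h => absurd h hi).exists
    exact hdown _ (hmem j).2 _ hj

end MomentAngleComplex

namespace IsSimplicialFan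

variable {n m : ℕ} {K : Set (Set (Fin m))} {a : Fin m → Fin n → ℝ}

lemma eq_zero_of_norm_eq (hK : IsSimplicialFan K a) {z w : Fin m → ℂ}
    (hz : z ∈ momentAngleComplex m K) (hw : w ∈ momentAngleComplex m K) {h : Fin m → ℝ}
    (hh : ∑ i, h i • a i = 0) (hnorm : ∀ i, ‖w i‖ = Real.exp (h i) * ‖z i‖) : h = 0 := by
  refine hK.eq_zero_of_sign_sets_mem hh (hK.down_closed _ hz.2 _ fun i (hi : 0 < h i) => ?_)
    (hK.down_closed _ hw.2 _ fun i (hi : h i < 0) => ?_)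
  · change ‖z i‖ < 1
    by_contra! hzi
    have := hw.1 i
    rw [hnorm i] at this
    exact this.not_gt (one_lt_mul_of_lt_of_le (Real.one_lt_exp_iff.2 hi) hzi)
  · change ‖w i‖ < 1
    rw [hnorm i]
    exact mul_lt_one_of_nonneg_of_lt_one_left (Real.exp_pos _).le (Real.exp_lt_one_iff.2 hi)
      (hz.1 i)

variable {W : Submodule ℝ (Fin m → ℂ)}

lemma eq_of_norm_eq (hK : IsSimplicialFan K a) (hWker : ∀ ζ ∈ W, ∑ i, (ζ i).re • a i = 0)
    (hWre : ∀ ζ ∈ W, (∀ i, (ζ i).re = 0) → ζ = 0) {ζ ζ' : Fin m → ℂ} (hζ : ζ ∈ W) (hζ' : ζ' ∈ W)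
    {z w w' : Fin m → ℂ} (hw : w ∈ momentAngleComplex m K) (hw' : w' ∈ momentAngleComplex m K)
    (hnorm : ∀ i, ‖w i‖ = Real.exp (ζ i).re * ‖z i‖)
    (hnorm' : ∀ i, ‖w' i‖ = Real.exp (ζ' i).re * ‖z i‖) : ζ = ζ' := by
  have hsub := hK.eq_zero_of_norm_eq hw hw' (h := fun i => (ζ' i - ζ i).re)
    (hWker _ (sub_mem hζ' hζ)) fun i => by
      rw [hnorm, hnorm', Complex.sub_re, Real.exp_sub]
      field_simp
  exact (sub_eq_zero.1 (hWre _ (sub_mem hζ' hζ) fun i => congrFun hsub i)).symm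

lemma expAct_eq_self (hK : IsSimplicialFan K a) (hWker : ∀ ζ ∈ W, ∑ i, (ζ i).re • a i = 0)
    (hWre : ∀ ζ ∈ W, (∀ i, (ζ i).re = 0) → ζ = 0) {ζ z : Fin m → ℂ} (hζ : ζ ∈ W)
    (hz : z ∈ momentAngleComplex m K) (hζz : expAct ζ z ∈ momentAngleComplex m K) :
    expAct ζ z = z := by
  have := hK.eq_of_norm_eq hWker hWre W.zero_mem hζ hz hζz (by simp) (norm_expAct_apply ζ z)
  rw [← this, expAct_zero]

lemma expAct_eq_expAct_expAct (hK : IsSimplicialFan K a)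
    (hWker : ∀ ζ ∈ W, ∑ i, (ζ i).re • a i = 0) (hWre : ∀ ζ ∈ W, (∀ i, (ζ i).re = 0) → ζ = 0)
    {ζ ζz ζw ξ z w : Fin m → ℂ} (hζ : ζ ∈ W) (hζz : ζz ∈ W) (hζw : ζw ∈ W)
    (hξ : ∀ i, (ξ i).re = 0) (hw : w = expAct (ζ + ξ) z)
    (hz : expAct ζz z ∈ momentAngleComplex m K) (hw' : expAct ζw w ∈ momentAngleComplex m K) :
    expAct ζw w = expAct ξ (expAct ζz z) := by
  have hsum : ζz = ζw + ζ := hK.eq_of_norm_eq hWker hWre hζz (add_mem hζw hζ) hz hw'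
    (norm_expAct_apply ζz z) fun i => by
      simp [hw, norm_expAct_apply, hξ, Real.exp_add, mul_assoc]
  rw [hw, ← expAct_add, ← expAct_add, hsum, add_comm ξ, add_assoc]

/-- Rescale `z` by `exp(-c - log ‖z‖)`, where `c` comes from the star of the face `{z = 0}`. -/
lemma exists_exp_mul_norm_mem (hK : IsSimplicialFan K a) (hcover : ⋃ I ∈ K, cone a I = Set.univ)
    {z : Fin m → ℂ} (hz : z ∈ UK m K) :
    ∃ h : Fin m → ℝ, ∑ i, h i • a i = 0 ∧ (∀ i, Real.exp (h i) * ‖z i‖ ≤ 1) ∧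
      {i | Real.exp (h i) * ‖z i‖ < 1} ∈ K := by
  obtain ⟨I, hI, hZI, c, hcI, hc0, hc⟩ :=
    hK.exists_mem_star hcover hz (-∑ i, Real.log ‖z i‖ • a i)
  have hscale : ∀ i, z i ≠ 0 →
      Real.exp (-(c i + Real.log ‖z i‖)) * ‖z i‖ = Real.exp (-c i) := fun i hzi => by
    rw [neg_add, Real.exp_add, Real.exp_neg (Real.log _), Real.exp_log (norm_pos_iff.2 hzi)]
    field_simp
  refine ⟨fun i => -(c i + Real.log ‖z i‖), ?_, fun i => ?_, hK.down_closed _ hI _ fun i hi => ?_⟩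
  · simp [add_smul, Finset.sum_add_distrib, ← hc]
  · by_cases hzi : z i = 0
    · simp [hzi]
    · rw [hscale i hzi, Real.exp_le_one_iff, neg_nonpos]
      exact hc0 i hzi
  · by_contra hiI
    have hzi : z i ≠ 0 := fun h => hiI (hZI h)
    have hi : Real.exp (-(c i + Real.log ‖z i‖)) * ‖z i‖ < 1 := hi
    rw [hscale i hzi, hcI i hiI] at hi
    simp at hi

lemma exists_expAct_mem (hK : IsSimplicialFan K a) (hcover : ⋃ I ∈ K, cone a I = Set.univ)
    (hWsurj : ∀ h : Fin m → ℝ, ∑ i, h i • a i = 0 → ∃ ζ ∈ W, ∀ i, (ζ i).re = h i)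
    {z : Fin m → ℂ} (hz : z ∈ UK m K) : ∃ ζ ∈ W, expAct ζ z ∈ momentAngleComplex m K := by
  obtain ⟨h, hh, hle, hlt⟩ := hK.exists_exp_mul_norm_mem hcover hz
  obtain ⟨ζ, hζ, hre⟩ := hWsurj h hh
  exact ⟨ζ, hζ, fun i => by rw [norm_expAct_apply, hre]; exact hle i, by
    simpa only [norm_expAct_apply, hre] using hlt⟩

/-- If the exponents were unbounded, a limit direction `η₀ ∈ W` of them would have sign sets in
`K`, hence real part `0`, hence vanish. -/
lemma exists_eventually_norm_le (hK : IsSimplicialFan K a)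
    (hWker : ∀ ζ ∈ W, ∑ i, (ζ i).re • a i = 0) (hWre : ∀ ζ ∈ W, (∀ i, (ζ i).re = 0) → ζ = 0)
    {zs : ℕ → Fin m → ℂ} {z : Fin m → ℂ} (hz : Tendsto zs atTop (𝓝 z)) (hzU : z ∈ UK m K)
    {ζs : ℕ → Fin m → ℂ} (hζW : ∀ j, ζs j ∈ W)
    (hmem : ∀ j, expAct (ζs j) (zs j) ∈ momentAngleComplex m K) :
    ∃ C, ∀ᶠ j in atTop, ‖ζs j‖ ≤ C := by
  by_contra! hunb
  obtain ⟨φ, hφ, hlarge⟩ := extraction_forall_of_frequently fun j : ℕ => hunb j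
  set s := fun j => ‖ζs (φ j)‖
  have hs : Tendsto s atTop atTop :=
    tendsto_atTop_mono (fun j => (hlarge j).le) tendsto_natCast_atTop_atTop
  have hs0 : ∀ j, s j ≠ 0 := fun j => ((Nat.cast_nonneg j).trans_lt (hlarge j)).ne'
  obtain ⟨η₀, hη₀, ψ, hψ, hη⟩ := (isCompact_sphere (0 : Fin m → ℂ) 1).tendsto_subseq
    (x := fun j => (s j)⁻¹ • ζs (φ j)) fun j => by
      simp [norm_smul, s, inv_mul_cancel₀ (hs0 j)]
  have hη₀W : η₀ ∈ W := (Submodule.closed_of_finiteDimensional W).mem_of_tendsto hη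
    (Eventually.of_forall fun j => W.smul_mem _ (hζW _))
  obtain ⟨hpos, hneg⟩ := sign_sets_mem_of_tendsto hK.down_closed
    (hz.comp (hφ.comp hψ).tendsto_atTop) hzU (hs.comp hψ.tendsto_atTop) hη fun j => by
      simpa [smul_inv_smul₀ (hs0 _)] using hmem (φ (ψ j))
  have hre := hK.eq_zero_of_sign_sets_mem (hWker _ hη₀W) hpos hneg
  have : η₀ = 0 := hWre _ hη₀W fun i => congrFun hre i
  simp [this] at hη₀

/-- The exponents `ν zⱼ` stay bounded as `zⱼ → z`, and each of their cluster values again moves `z`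
into `Z_K`, hence equals `ν z`. -/
lemma continuous_of_expAct_mem (hK : IsSimplicialFan K a)
    (hWker : ∀ ζ ∈ W, ∑ i, (ζ i).re • a i = 0) (hWre : ∀ ζ ∈ W, (∀ i, (ζ i).re = 0) → ζ = 0)
    (ν : UK m K → Fin m → ℂ) (hνW : ∀ z, ν z ∈ W)
    (hνZ : ∀ z, expAct (ν z) z ∈ momentAngleComplex m K) : Continuous ν := by
  rw [continuous_iff_seqContinuous]
  intro zs z hz
  have hz' : Tendsto (fun j => (zs j : Fin m → ℂ)) atTop (𝓝 z) :=
    (continuous_subtype_val.tendsto z).comp hz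
  obtain ⟨C, hC⟩ := hK.exists_eventually_norm_le hWker hWre hz' z.2 (fun j => hνW (zs j))
    fun j => hνZ (zs j)
  refine (isCompact_closedBall (0 : Fin m → ℂ) C).tendsto_nhds_of_unique_mapClusterPt
    (hC.mono fun j hj => mem_closedBall_zero_iff.2 hj) fun ζ _ hζ => ?_
  obtain ⟨ψ, hψ, hlim⟩ := hζ.tendsto_subseq
  have hζW : ζ ∈ W := (Submodule.closed_of_finiteDimensional W).mem_of_tendsto hlim
    (Eventually.of_forall fun j => hνW _)
  have hζZ : expAct ζ z ∈ momentAngleComplex m K :=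
    (isClosed_momentAngleComplex hK.down_closed).mem_of_tendsto
      ((continuous_expAct.tendsto (ζ, (z : Fin m → ℂ))).comp
        (hlim.prodMk_nhds (hz'.comp hψ.tendsto_atTop)))
      (Eventually.of_forall fun j => hνZ _)
  exact hK.eq_of_norm_eq hWker hWre hζW (hνW z) hζZ (hνZ z) (norm_expAct_apply _ _)
    (norm_expAct_apply _ _)

end IsSimplicialFan

section OrbitRelations

variable {m l : ℕ} {K : Set (Set (Fin m))} {N : AddSubgroup (Fin m → ℤ)}
  {Ω : (Fin l → ℂ) →ₗ[ℂ] (Fin m → ℂ)}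

lemma cOmegaNOrbitRel_of_tNOrbitRel (hdown : ∀ I ∈ K, ∀ J ⊆ I, J ∈ K)
    {z w : momentAngleComplex m K} (h : TNOrbitRel m K N z w) :
    COmegaNOrbitRel m l K N Ω ⟨z, momentAngleComplex_subset_UK hdown z.2⟩
      ⟨w, momentAngleComplex_subset_UK hdown w.2⟩ := by
  obtain ⟨x, hx, hw⟩ := h
  exact ⟨_, ofReal_mem_NC hx, 0, fun i => by simpa using hw i⟩

lemma exists_eq_expAct_of_cOmegaNOrbitRel {z w : UK m K} (h : COmegaNOrbitRel m l K N Ω z w) :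
    ∃ ζ ∈ realExponents N Ω, ∃ x ∈ NR m N,
      (w : Fin m → ℂ) = expAct (ζ + fun i => 2 * (Real.pi : ℂ) * Complex.I * (x i : ℂ)) z := by
  obtain ⟨u, hu, v, hw⟩ := h
  obtain ⟨hre, him⟩ := re_mem_NR_and_im_mem_NR hu
  refine ⟨_, mem_realExponents.2 ⟨_, Submodule.smul_mem _ (-(2 * Real.pi)) him, v, rfl⟩, _, hre,
    funext fun i => ?_⟩
  rw [hw i, expAct]
  congr 2
  simp only [Pi.add_apply, Pi.smul_apply, smul_eq_mul]
  push_cast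
  linear_combination (2 * (Real.pi : ℂ) * Complex.I) * (Complex.re_add_im (u i)).symm +
    2 * Real.pi * (u i).im * Complex.I_sq

lemma cOmegaNOrbitRel_of_eq_expAct {z w : UK m K} {ζ : Fin m → ℂ} (hζ : ζ ∈ realExponents N Ω)
    (hw : (w : Fin m → ℂ) = expAct ζ z) : COmegaNOrbitRel m l K N Ω z w := by
  obtain ⟨x, hx, v, rfl⟩ := mem_realExponents.1 hζ
  refine ⟨(2 * (Real.pi : ℂ) * Complex.I)⁻¹ • fun i => (x i : ℂ),
    (NC m N).smul_mem _ (ofReal_mem_NC hx), v, fun i => ?_⟩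
  rw [hw, expAct]
  congr 2
  simp only [Pi.add_apply, Pi.smul_apply, smul_eq_mul]
  field_simp

end OrbitRelations

theorem ZK_mod_TN_homeomorphic_UK_mod_COmegaN_general (n m k l : ℕ)
    (hml : m = n + k + 2 * l)
    (a : Fin m → (Fin n → ℝ)) (K : Set (Set (Fin m)))
    (hKdown : ∀ I ∈ K, ∀ J ⊆ I, J ∈ K)
    (hInd : ∀ I ∈ K, LinearIndependent ℝ (fun i : I => a i.1))
    (hInter : ∀ I ∈ K, ∀ J ∈ K, cone a I ∩ cone a J = cone a (I ∩ J))
    (hCover : (⋃ I ∈ K, cone a I) = Set.univ)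
    (N : AddSubgroup (Fin m → ℤ))
    (hNker : ∀ x ∈ N, ∑ i, (x i : ℝ) • a i = 0)
    (hNrank : Module.finrank ℝ (NR m N) = k)
    (Ω : (Fin l → ℂ) →ₗ[ℂ] (Fin m → ℂ))
    (hΩinj : Function.Injective fun w : Fin l → ℂ =>
      (NR m N).mkQ (fun i => (Ω w i).re))
    (hΩker : ∀ w : Fin l → ℂ, ∑ i, (Ω w i).re • a i = 0) :
    ∃ e : Quot (TNOrbitRel m K N) ≃ₜ Quot (COmegaNOrbitRel m l K N Ω),
      ∀ (z : momentAngleComplex m K) (h : (z : Fin m → ℂ) ∈ UK m K),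
        e (Quot.mk (TNOrbitRel m K N) z) =
          Quot.mk (COmegaNOrbitRel m l K N Ω) ⟨(z : Fin m → ℂ), h⟩ := by
  have hK : IsSimplicialFan K a := ⟨hKdown, hInd, hInter⟩
  have hWker := fun ζ => sum_re_smul_eq_zero_of_mem_realExponents (ζ := ζ) hNker hΩker
  have hWre := fun ζ => eq_zero_of_mem_realExponents_of_re_eq_zero (ζ := ζ) hΩinj
  choose ν hνW hνZ using fun z : UK m K => hK.exists_expAct_mem hCover
    (fun _ => exists_mem_realExponents_re_eq hml (surjective_linearCombination_of_cover hCover)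
      hNker hNrank hΩinj hΩker) z.2
  let r : UK m K → momentAngleComplex m K := fun z => ⟨expAct (ν z) z, hνZ z⟩
  have hr : Continuous r := (continuous_expAct.comp
    ((hK.continuous_of_expAct_mem hWker hWre ν hνW hνZ).prodMk continuous_subtype_val)).subtype_mk _
  let f : Quot (TNOrbitRel m K N) → Quot (COmegaNOrbitRel m l K N Ω) :=
    Quot.lift (fun z => Quot.mk _ ⟨z, momentAngleComplex_subset_UK hKdown z.2⟩)
      fun _ _ h => Quot.sound (cOmegaNOrbitRel_of_tNOrbitRel hKdown h)
  let g : Quot (COmegaNOrbitRel m l K N Ω) → Quot (TNOrbitRel m K N) :=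
    Quot.lift (fun z => Quot.mk _ (r z)) fun z w h => by
      obtain ⟨ζ, hζ, x, hx, hw⟩ := exists_eq_expAct_of_cOmegaNOrbitRel h
      refine Quot.sound ⟨x, hx, congrFun ?_⟩
      exact hK.expAct_eq_expAct_expAct hWker hWre hζ (hνW z) (hνW w) (fun i => by simp) hw
        (hνZ z) (hνZ w)
  refine ⟨{ toFun := f, invFun := g
            left_inv := Quot.ind fun z => congrArg (Quot.mk _) (Subtype.ext
              (hK.expAct_eq_self hWker hWre (hνW _) z.2 (hνZ _)))
            right_inv := Quot.ind fun z =>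
              (Quot.sound (cOmegaNOrbitRel_of_eq_expAct (hνW z) rfl)).symm
            continuous_toFun := continuous_quot_lift _
              (continuous_quot_mk.comp (continuous_subtype_val.subtype_mk _))
            continuous_invFun := continuous_quot_lift _ (continuous_quot_mk.comp hr) },
    fun _ _ => rfl⟩

/-- If `(K; a₁,…,a_m)` underlies a complete simplicial fan in ℝⁿ, `N` has rank
`k` and `m - n - k = 2ℓ`, then the inclusion `Z_K ↪ U(K)` induces a homeomorphism
`Z_K / T(N) ≅ U(K) / C_Ω(N)` of orbit spaces with their quotient topologies. -/
theorem ZK_mod_TN_homeomorphic_UK_mod_COmegaN (n m k l : ℕ) (hn : 1 ≤ n) (hl : 1 ≤ l)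
    (hml : m = n + k + 2 * l)
    (a : Fin m → (Fin n → ℝ)) (K : Set (Set (Fin m)))
    (hKempty : ∅ ∈ K) (hKdown : ∀ I ∈ K, ∀ J ⊆ I, J ∈ K)
    (hInd : ∀ I ∈ K, LinearIndependent ℝ (fun i : I => a i.1))
    (hInter : ∀ I ∈ K, ∀ J ∈ K, cone a I ∩ cone a J = cone a (I ∩ J))
    (hCover : (⋃ I ∈ K, cone a I) = Set.univ)
    (N : AddSubgroup (Fin m → ℤ))
    (hNtf : ∀ (x : Fin m → ℤ) (c : ℤ), c ≠ 0 → c • x ∈ N → x ∈ N)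
    (hNker : ∀ x ∈ N, ∑ i, (x i : ℝ) • a i = 0)
    (hNrank : Module.finrank ℝ (NR m N) = k)
    (Ω : (Fin l → ℂ) →ₗ[ℂ] (Fin m → ℂ))
    (hΩinj : Function.Injective fun w : Fin l → ℂ =>
      (NR m N).mkQ (fun i => (Ω w i).re))
    (hΩker : ∀ w : Fin l → ℂ, ∑ i, (Ω w i).re • a i = 0) :
    ∃ e : Quot (TNOrbitRel m K N) ≃ₜ Quot (COmegaNOrbitRel m l K N Ω),
      ∀ (z : momentAngleComplex m K) (h : (z : Fin m → ℂ) ∈ UK m K),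
        e (Quot.mk (TNOrbitRel m K N) z) =
          Quot.mk (COmegaNOrbitRel m l K N Ω) ⟨(z : Fin m → ℂ), h⟩ :=
  ZK_mod_TN_homeomorphic_UK_mod_COmegaN_general n m k l hml a K hKdown hInd hInter hCover N hNker
    hNrank Ω hΩinj hΩker
end
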